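/- arXiv:1511.08462 — 2 statements merged into one kernel-verified Lean document; each statement's English description precedes it below -/
import Mathlib

section
/- Let J ⊆ ℝ be an open interval and (f_n) a sequence of convex functions J → ℝ converging pointwise to a finite function f. Then for every x ∈ J, limsup_{n→∞} D⁺f_n(x) ≤ D⁺f(x) and liminf_{n→∞} D⁻f_n(x) ≥ D⁻f(x), where D⁺ and D⁻ denote the right and left derivatives (which exist for convex functions). -/
/-!
Convexity traps each one-sided derivative of `f n` at `x` between secant slopes:
`slope (f n) x y ≤ D⁺ f n (x) ≤ slope (f n) x z` for `y < x < z`, and likewise for `D⁻`.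
The slopes converge with `f n`, so `limsup D⁺ f n (x) ≤ slope g x z` for every `z > x`
(the lower secant bound keeps the limsup from degenerating), and letting `z ↓ x` gives
`limsup D⁺ f n (x) ≤ D⁺ g (x)`. The left derivative is symmetric.
-/

open Filter Topology Set

namespace ConvexOn

variable {S : Set ℝ} {f : ℝ → ℝ} {f' x y : ℝ}

lemma slope_le_of_hasDerivWithinAt_Ioi_of_lt (hf : ConvexOn ℝ S f) (hx : x ∈ interior S)
    (hy : y ∈ S) (hyx : y < x) (hf' : HasDerivWithinAt f f' (Ioi x) x) :
    slope f x y ≤ f' := by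
  rw [← hf'.derivWithin (uniqueDiffWithinAt_Ioi x), slope_comm]
  exact (hf.slope_le_leftDeriv_of_mem_interior hy hx hyx).trans
    (hf.leftDeriv_le_rightDeriv_of_mem_interior hx)

lemma le_slope_of_hasDerivWithinAt_Iio_of_lt (hf : ConvexOn ℝ S f) (hx : x ∈ interior S)
    (hy : y ∈ S) (hxy : x < y) (hf' : HasDerivWithinAt f f' (Iio x) x) :
    f' ≤ slope f x y := by
  rw [← hf'.derivWithin (uniqueDiffWithinAt_Iio x)]
  exact (hf.leftDeriv_le_rightDeriv_of_mem_interior hx).trans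
    (hf.rightDeriv_le_slope_of_mem_interior hx hy hxy)

end ConvexOn

section

variable {S : Set ℝ} {f : ℕ → ℝ → ℝ} {g : ℝ → ℝ} {d : ℕ → ℝ} {g' x : ℝ}

lemma tendsto_slope_of_tendsto (hx : Tendsto (fun n => f n x) atTop (𝓝 (g x)))
    {y : ℝ} (hy : Tendsto (fun n => f n y) atTop (𝓝 (g y))) :
    Tendsto (fun n => slope (f n) x y) atTop (𝓝 (slope g x y)) := by
  simpa only [slope, vsub_eq_sub] using (hy.sub hx).const_smul (y - x)⁻¹

lemma limsup_le_of_hasDerivWithinAt_Ioi_of_tendsto (hf : ∀ n, ConvexOn ℝ S (f n))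
    (hx : x ∈ interior S) (hd : ∀ n, HasDerivWithinAt (f n) (d n) (Ioi x) x)
    (hlim : ∀ y ∈ S, Tendsto (fun n => f n y) atTop (𝓝 (g y)))
    (hg : HasDerivWithinAt g g' (Ioi x) x) :
    limsup d atTop ≤ g' := by
  have hS : S ∈ 𝓝 x := mem_interior_iff_mem_nhds.mp hx
  have hslope : ∀ y ∈ S, Tendsto (fun n => slope (f n) x y) atTop (𝓝 (slope g x y)) :=
    fun y hy => tendsto_slope_of_tendsto (hlim x (interior_subset hx)) (hlim y hy)
  obtain ⟨y₀, hy₀x, hy₀⟩ := Filter.nonempty_of_mem (inter_mem_nhdsWithin (Iio x) hS)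
  have hcobdd : IsCoboundedUnder (· ≤ ·) atTop d :=
    ((hslope y₀ hy₀).isBoundedUnder_ge.mono_ge (Eventually.of_forall fun n =>
      (hf n).slope_le_of_hasDerivWithinAt_Ioi_of_lt hx hy₀ hy₀x (hd n))).isCoboundedUnder_le
  have hle_slope : ∀ y ∈ S, x < y → limsup d atTop ≤ slope g x y := fun y hy hxy =>
    (hslope y hy).limsup_eq ▸ limsup_le_limsup (Eventually.of_forall fun n =>
      (hf n).le_slope_of_hasDerivWithinAt_Ioi (interior_subset hx) hy hxy (hd n))
      hcobdd (hslope y hy).isBoundedUnder_le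
  refine ge_of_tendsto ((hasDerivWithinAt_iff_tendsto_slope' self_notMem_Ioi).mp hg) ?_
  filter_upwards [inter_mem_nhdsWithin (Ioi x) hS] with y ⟨hxy, hy⟩
  exact hle_slope y hy hxy

lemma le_liminf_of_hasDerivWithinAt_Iio_of_tendsto (hf : ∀ n, ConvexOn ℝ S (f n))
    (hx : x ∈ interior S) (hd : ∀ n, HasDerivWithinAt (f n) (d n) (Iio x) x)
    (hlim : ∀ y ∈ S, Tendsto (fun n => f n y) atTop (𝓝 (g y)))
    (hg : HasDerivWithinAt g g' (Iio x) x) :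
    g' ≤ liminf d atTop := by
  have hS : S ∈ 𝓝 x := mem_interior_iff_mem_nhds.mp hx
  have hslope : ∀ y ∈ S, Tendsto (fun n => slope (f n) x y) atTop (𝓝 (slope g x y)) :=
    fun y hy => tendsto_slope_of_tendsto (hlim x (interior_subset hx)) (hlim y hy)
  obtain ⟨y₀, hxy₀, hy₀⟩ := Filter.nonempty_of_mem (inter_mem_nhdsWithin (Ioi x) hS)
  have hcobdd : IsCoboundedUnder (· ≥ ·) atTop d :=
    ((hslope y₀ hy₀).isBoundedUnder_le.mono_le (Eventually.of_forall fun n =>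
      (hf n).le_slope_of_hasDerivWithinAt_Iio_of_lt hx hy₀ hxy₀ (hd n))).isCoboundedUnder_ge
  have hslope_le : ∀ y ∈ S, y < x → slope g x y ≤ liminf d atTop := fun y hy hyx =>
    (hslope y hy).liminf_eq ▸ liminf_le_liminf (Eventually.of_forall fun n => by
      rw [slope_comm]
      exact (hf n).slope_le_of_hasDerivWithinAt_Iio hy (interior_subset hx) hyx (hd n))
      (hslope y hy).isBoundedUnder_ge hcobdd
  refine le_of_tendsto ((hasDerivWithinAt_iff_tendsto_slope' self_notMem_Iio).mp hg) ?_
  filter_upwards [inter_mem_nhdsWithin (Iio x) hS] with y ⟨hyx, hy⟩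
  exact hslope_le y hy hyx

end

theorem stmt_0_general (J : Set ℝ) (hJopen : IsOpen J)
    (f : ℕ → ℝ → ℝ) (g : ℝ → ℝ)
    (hconv : ∀ n, ConvexOn ℝ J (f n))
    (hlim : ∀ x ∈ J, Tendsto (fun n => f n x) atTop (nhds (g x)))
    (dp dm : ℕ → ℝ → ℝ) (gp gm : ℝ → ℝ)
    (hdp : ∀ n, ∀ x ∈ J, HasDerivWithinAt (f n) (dp n x) (Set.Ioi x) x)
    (hdm : ∀ n, ∀ x ∈ J, HasDerivWithinAt (f n) (dm n x) (Set.Iio x) x)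
    (hgp : ∀ x ∈ J, HasDerivWithinAt g (gp x) (Set.Ioi x) x)
    (hgm : ∀ x ∈ J, HasDerivWithinAt g (gm x) (Set.Iio x) x) :
    ∀ x ∈ J,
      limsup (fun n => dp n x) atTop ≤ gp x ∧
      gm x ≤ liminf (fun n => dm n x) atTop := by
  intro x hx
  have hx' : x ∈ interior J := hJopen.interior_eq.symm ▸ hx
  exact ⟨limsup_le_of_hasDerivWithinAt_Ioi_of_tendsto hconv hx' (hdp · x hx) hlim (hgp x hx),
    le_liminf_of_hasDerivWithinAt_Iio_of_tendsto hconv hx' (hdm · x hx) hlim (hgm x hx)⟩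

/-- Let `J ⊆ ℝ` be an open interval and `(f n)` a sequence of convex functions on `J`
converging pointwise to a finite function `g`.  Denoting by `dp n x` / `dm n x` the right /
left derivatives of `f n` at `x` and by `gp x` / `gm x` those of `g` (which exist for convex
functions), for every `x ∈ J` we have
`limsup_n dp n x ≤ gp x` and `liminf_n dm n x ≥ gm x`. -/
theorem stmt_0 (J : Set ℝ) (hJopen : IsOpen J) (hJint : Convex ℝ J)
    (f : ℕ → ℝ → ℝ) (g : ℝ → ℝ)
    (hconv : ∀ n, ConvexOn ℝ J (f n)) (hgconv : ConvexOn ℝ J g)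
    (hlim : ∀ x ∈ J, Tendsto (fun n => f n x) atTop (nhds (g x)))
    (dp dm : ℕ → ℝ → ℝ) (gp gm : ℝ → ℝ)
    (hdp : ∀ n, ∀ x ∈ J, HasDerivWithinAt (f n) (dp n x) (Set.Ioi x) x)
    (hdm : ∀ n, ∀ x ∈ J, HasDerivWithinAt (f n) (dm n x) (Set.Iio x) x)
    (hgp : ∀ x ∈ J, HasDerivWithinAt g (gp x) (Set.Ioi x) x)
    (hgm : ∀ x ∈ J, HasDerivWithinAt g (gm x) (Set.Iio x) x) :
    ∀ x ∈ J,
      limsup (fun n => dp n x) atTop ≤ gp x ∧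
      gm x ≤ liminf (fun n => dm n x) atTop :=
  stmt_0_general J hJopen f g hconv hlim dp dm gp gm hdp hdm hgp hgm
end

section
/- Let x : [0,T] → ℝ≥0 be absolutely continuous and satisfy x'(t) + α x(t) ≤ g(t) x(t)^{1-β} + b(t) for almost every t ∈ [0,T], where α > 0, 0 < β < 1, and g, b are nonnegative integrable functions on [0,T]. Then for all t ∈ [0,T], (α/2) ∫₀ᵗ x(τ)^β dτ ≤ β⁻¹ (1 + x(0))^β + ∫₀ᵗ (α + g(τ) + b(τ)) dτ. -/
/-!
Multiplying the differential inequality by `(1 + x)^(β-1) ≤ 1` turns `x'` into the derivative of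
`β⁻¹ (1 + x)^β` (a chain rule for absolutely continuous functions, valid because
`v ↦ β⁻¹ (1 + v)^β` is Lipschitz on `[0, ∞)`), bounds `g x^(1-β)` by `g`, and makes
`α x (1 + x)^(β-1) ≥ α (x^β - 1)`. Integrating over `[0, t]` and dropping `β⁻¹ (1 + x t)^β ≥ 0`
gives the estimate.
-/

open MeasureTheory Set Filter Real
open scoped NNReal

theorem LipschitzOnWith.comp_absolutelyContinuousOnInterval {X Y : Type*} [PseudoMetricSpace X]
    [PseudoMetricSpace Y] {F : X → Y} {K : ℝ≥0} {s : Set X} {f : ℝ → X} {a b : ℝ}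
    (hF : LipschitzOnWith K F s) (hf : AbsolutelyContinuousOnInterval f a b)
    (hfs : MapsTo f (uIcc a b) s) : AbsolutelyContinuousOnInterval (F ∘ f) a b := by
  unfold AbsolutelyContinuousOnInterval at hf ⊢
  have hKf := hf.const_mul (K : ℝ)
  rw [mul_zero] at hKf
  refine squeeze_zero' (.of_forall fun E ↦ Finset.sum_nonneg fun i _ ↦ dist_nonneg) ?_ hKf
  filter_upwards [mem_inf_of_right (mem_principal_self _)] with E hE
  rw [Finset.mul_sum]
  exact Finset.sum_le_sum fun i hi ↦
    hF.dist_le_mul _ (hfs (hE.1 i hi).1) _ (hfs (hE.1 i hi).2)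

theorem intervalIntegral.integral_comp_mul_eq_sub_of_eq_add_integral {F F' f f' : ℝ → ℝ}
    {s : Set ℝ} {K : ℝ≥0} {a b : ℝ} (hf' : IntervalIntegrable f' volume a b)
    (hf : ∀ x ∈ uIcc a b, f x = f a + ∫ t in a..x, f' t) (hfs : MapsTo f (uIcc a b) s)
    (hF : LipschitzOnWith K F s) (hF' : ∀ y ∈ s, HasDerivAt F (F' y) y) :
    ∫ x in a..b, F' (f x) * f' x = F (f b) - F (f a) := by
  set y : ℝ → ℝ := fun x ↦ f a + ∫ t in a..x, f' t
  have hyf : EqOn y f (uIcc a b) := fun x hx ↦ (hf x hx).symm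
  have hy : AbsolutelyContinuousOnInterval y a b :=
    (LipschitzWith.const (f a)).lipschitzOnWith.absolutelyContinuousOnInterval.fun_add
      (hf'.absolutelyContinuousOnInterval_intervalIntegral left_mem_uIcc)
  have hFy :=
    (hF.comp_absolutelyContinuousOnInterval hy (hfs.congr hyf.symm)).integral_deriv_eq_sub
  rw [Function.comp_apply, Function.comp_apply, hyf left_mem_uIcc, hyf right_mem_uIcc] at hFy
  rw [← hFy]
  refine intervalIntegral.integral_congr_ae ?_
  filter_upwards [hf'.ae_hasDerivAt_integral] with x hx hxab
  have hx' : x ∈ uIcc a b := uIoc_subset_uIcc hxab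
  have hyx : HasDerivAt y (f' x) x := (hx hx' a left_mem_uIcc).const_add (f a)
  have hFyx := (hF' (y x) (hyf hx' ▸ hfs hx')).comp x hyx
  rw [hFyx.deriv, hyf hx']

theorem hasDerivAt_inv_mul_one_add_rpow {β v : ℝ} (hβ : 0 < β) (hv : -1 < v) :
    HasDerivAt (fun v ↦ β⁻¹ * (1 + v) ^ β) ((1 + v) ^ (β - 1)) v := by
  refine ((((hasDerivAt_id' v).const_add 1).rpow_const (p := β)
    (Or.inl (by linarith : 0 < 1 + v).ne')).const_mul β⁻¹).congr_deriv ?_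
  field_simp

theorem lipschitzOnWith_inv_mul_one_add_rpow {β : ℝ} (hβ0 : 0 < β) (hβ1 : β ≤ 1) :
    LipschitzOnWith 1 (fun v ↦ β⁻¹ * (1 + v) ^ β) (Ici 0) := by
  refine (convex_Ici 0).lipschitzOnWith_of_nnnorm_hasDerivWithin_le (fun v (hv : 0 ≤ v) ↦
    (hasDerivAt_inv_mul_one_add_rpow hβ0 (by linarith)).hasDerivWithinAt) fun v (hv : 0 ≤ v) ↦ ?_
  rw [← NNReal.coe_le_coe, coe_nnnorm, norm_of_nonneg (by positivity), NNReal.coe_one]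
  exact rpow_le_one_of_one_le_of_nonpos (by linarith) (by linarith)

theorem one_add_rpow_sub_one_mul_rpow_one_sub_le_one {β X : ℝ} (hX : 0 ≤ X) (hβ : β ≤ 1) :
    (1 + X) ^ (β - 1) * X ^ (1 - β) ≤ 1 := by
  calc (1 + X) ^ (β - 1) * X ^ (1 - β) ≤ (1 + X) ^ (β - 1) * (1 + X) ^ (1 - β) := by
        gcongr; linarith
    _ = 1 := by rw [← rpow_add (by positivity)]; simp

theorem rpow_le_one_add_mul_one_add_rpow_sub_one {β X : ℝ} (hX : 0 ≤ X) (hβ0 : 0 ≤ β)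
    (hβ1 : β ≤ 1) : X ^ β ≤ 1 + X * (1 + X) ^ (β - 1) := by
  have hm : (1 + X) ^ (β - 1) ≤ 1 := rpow_le_one_of_one_le_of_nonpos (by linarith) (by linarith)
  calc X ^ β ≤ (1 + X) ^ β := by gcongr; linarith
    _ = (1 + X) ^ (β - 1) + X * (1 + X) ^ (β - 1) := by
        rw [rpow_sub_one (by positivity)]; field_simp
    _ ≤ 1 + X * (1 + X) ^ (β - 1) := by linarith

theorem half_mul_rpow_add_one_add_rpow_mul_le {α β X D G B : ℝ} (hα : 0 ≤ α) (hβ0 : 0 ≤ β)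
    (hβ1 : β ≤ 1) (hX : 0 ≤ X) (hG : 0 ≤ G) (hB : 0 ≤ B)
    (h : D + α * X ≤ G * X ^ (1 - β) + B) :
    α / 2 * X ^ β + (1 + X) ^ (β - 1) * D ≤ α + G + B := by
  set m := (1 + X) ^ (β - 1)
  have hm0 : 0 ≤ m := by positivity
  have hm1 : m ≤ 1 := rpow_le_one_of_one_le_of_nonpos (by linarith) (by linarith)
  have hmD : m * D ≤ G * (m * X ^ (1 - β)) + m * B - α * (X * m) := by
    nlinarith [mul_le_mul_of_nonneg_left h hm0]
  have hG' : G * (m * X ^ (1 - β)) ≤ G :=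
    mul_le_of_le_one_right hG (one_add_rpow_sub_one_mul_rpow_one_sub_le_one hX hβ1)
  have hB' : m * B ≤ B := mul_le_of_le_one_left hB hm1
  have hXβ : X ^ β ≤ 1 + X * m := rpow_le_one_add_mul_one_add_rpow_sub_one hX hβ0 hβ1
  nlinarith [rpow_nonneg hX β]

theorem integral_one_add_rpow_sub_one_mul_eq {t β : ℝ} (hβ0 : 0 < β) (hβ1 : β ≤ 1)
    {x x' : ℝ → ℝ} (hxnn : ∀ s ∈ uIcc 0 t, 0 ≤ x s) (hx' : IntervalIntegrable x' volume 0 t)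
    (hAC : ∀ s ∈ uIcc 0 t, x s = x 0 + ∫ τ in (0:ℝ)..s, x' τ) :
    ∫ τ in (0:ℝ)..t, (1 + x τ) ^ (β - 1) * x' τ
      = β⁻¹ * (1 + x t) ^ β - β⁻¹ * (1 + x 0) ^ β :=
  intervalIntegral.integral_comp_mul_eq_sub_of_eq_add_integral hx' hAC hxnn
    (lipschitzOnWith_inv_mul_one_add_rpow hβ0 hβ1)
    fun v (hv : 0 ≤ v) ↦ hasDerivAt_inv_mul_one_add_rpow hβ0 (by linarith)

theorem half_mul_integral_rpow_le {t α β : ℝ} (ht : 0 ≤ t) (hα : 0 ≤ α) (hβ0 : 0 < β)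
    (hβ1 : β ≤ 1) {x x' g b : ℝ → ℝ} (hxnn : ∀ s ∈ uIcc 0 t, 0 ≤ x s)
    (hx' : IntervalIntegrable x' volume 0 t)
    (hAC : ∀ s ∈ uIcc 0 t, x s = x 0 + ∫ τ in (0:ℝ)..s, x' τ)
    (hgnn : ∀ s ∈ uIcc 0 t, 0 ≤ g s) (hbnn : ∀ s ∈ uIcc 0 t, 0 ≤ b s)
    (hg : IntervalIntegrable g volume 0 t) (hb : IntervalIntegrable b volume 0 t)
    (hineq : ∀ᵐ s ∂(volume.restrict (uIcc 0 t)), x' s + α * x s ≤ g s * x s ^ (1 - β) + b s) :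
    α / 2 * ∫ τ in (0:ℝ)..t, x τ ^ β ≤
      β⁻¹ * (1 + x 0) ^ β + ∫ τ in (0:ℝ)..t, (α + g τ + b τ) := by
  have hxcont : ContinuousOn x (uIcc 0 t) :=
    ((intervalIntegral.continuousOn_primitive_interval' hx' left_mem_uIcc).const_add
      (x 0)).congr hAC
  have hxβ : IntervalIntegrable (fun τ ↦ x τ ^ β) volume 0 t :=
    (hxcont.rpow_const fun _ _ ↦ Or.inr hβ0.le).intervalIntegrable
  have hmx' : IntervalIntegrable (fun τ ↦ (1 + x τ) ^ (β - 1) * x' τ) volume 0 t :=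
    hx'.continuousOn_mul <| (continuousOn_const.add hxcont).rpow_const fun s hs ↦
      Or.inl (by linarith [hxnn s hs] : 0 < 1 + x s).ne'
  have hpointwise : ∀ᵐ τ ∂(volume.restrict (Icc 0 t)),
      α / 2 * x τ ^ β + (1 + x τ) ^ (β - 1) * x' τ ≤ α + g τ + b τ := by
    rw [← uIcc_of_le ht]
    filter_upwards [hineq, ae_restrict_mem measurableSet_uIcc] with τ hτ hτt
    exact half_mul_rpow_add_one_add_rpow_mul_le hα hβ0.le hβ1 (hxnn τ hτt) (hgnn τ hτt)
      (hbnn τ hτt) hτ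
  have hint := intervalIntegral.integral_mono_ae_restrict ht ((hxβ.const_mul _).add hmx')
    ((intervalIntegrable_const.add hg).add hb) hpointwise
  rw [intervalIntegral.integral_add (hxβ.const_mul _) hmx', intervalIntegral.integral_const_mul,
    integral_one_add_rpow_sub_one_mul_eq hβ0 hβ1 hxnn hx' hAC] at hint
  have hFt : 0 ≤ β⁻¹ * (1 + x t) ^ β := by
    have := hxnn t right_mem_uIcc
    positivity
  linarith

theorem stmt_1_general (T α β : ℝ) (hα : 0 < α) (hβ0 : 0 < β) (hβ1 : β < 1)
    (x x' g b : ℝ → ℝ)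
    (hxnn : ∀ t ∈ Set.Icc (0:ℝ) T, 0 ≤ x t)
    (hx'int : IntervalIntegrable x' volume 0 T)
    (hAC : ∀ t ∈ Set.Icc (0:ℝ) T, x t = x 0 + ∫ τ in (0:ℝ)..t, x' τ)
    (hgnn : ∀ t ∈ Set.Icc (0:ℝ) T, 0 ≤ g t)
    (hbnn : ∀ t ∈ Set.Icc (0:ℝ) T, 0 ≤ b t)
    (hgint : IntervalIntegrable g volume 0 T)
    (hbint : IntervalIntegrable b volume 0 T)
    (hineq : ∀ᵐ t ∂(volume.restrict (Set.Icc (0:ℝ) T)),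
      x' t + α * x t ≤ g t * x t ^ (1 - β) + b t) :
    ∀ t ∈ Set.Icc (0:ℝ) T,
      α / 2 * ∫ τ in (0:ℝ)..t, x τ ^ β ≤
        β⁻¹ * (1 + x 0) ^ β + ∫ τ in (0:ℝ)..t, (α + g τ + b τ) := by
  rintro t ⟨ht0, htT⟩
  have hsub : uIcc 0 t ⊆ Icc 0 T := by rw [uIcc_of_le ht0]; exact Icc_subset_Icc_right htT
  have hsubT : uIcc 0 t ⊆ uIcc 0 T := by rwa [uIcc_of_le (ht0.trans htT)]
  exact half_mul_integral_rpow_le ht0 hα.le hβ0 hβ1.le (fun s hs ↦ hxnn s (hsub hs))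
    (hx'int.mono_set hsubT) (fun s hs ↦ hAC s (hsub hs)) (fun s hs ↦ hgnn s (hsub hs))
    (fun s hs ↦ hbnn s (hsub hs)) (hgint.mono_set hsubT) (hbint.mono_set hsubT)
    (ae_restrict_of_ae_restrict_of_subset hsub hineq)

/-- Let `x : [0,T] → ℝ≥0` be absolutely continuous (encoded by the fundamental theorem of
calculus with an integrable a.e. derivative `x'`) satisfying
`x'(t) + α x(t) ≤ g(t) x(t)^{1-β} + b(t)` for a.e. `t ∈ [0,T]`, where `α > 0`, `0 < β < 1`
and `g, b` are nonnegative integrable functions on `[0,T]`.  Then for all `t ∈ [0,T]`,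
`(α/2) ∫₀ᵗ x(τ)^β dτ ≤ β⁻¹ (1 + x 0)^β + ∫₀ᵗ (α + g τ + b τ) dτ`. -/
theorem stmt_1 (T α β : ℝ) (hT : 0 < T) (hα : 0 < α) (hβ0 : 0 < β) (hβ1 : β < 1)
    (x x' g b : ℝ → ℝ)
    (hxnn : ∀ t ∈ Set.Icc (0:ℝ) T, 0 ≤ x t)
    (hxcont : ContinuousOn x (Set.Icc (0:ℝ) T))
    (hx'int : IntervalIntegrable x' volume 0 T)
    (hAC : ∀ t ∈ Set.Icc (0:ℝ) T, x t = x 0 + ∫ τ in (0:ℝ)..t, x' τ)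
    (hgnn : ∀ t ∈ Set.Icc (0:ℝ) T, 0 ≤ g t)
    (hbnn : ∀ t ∈ Set.Icc (0:ℝ) T, 0 ≤ b t)
    (hgint : IntervalIntegrable g volume 0 T)
    (hbint : IntervalIntegrable b volume 0 T)
    (hineq : ∀ᵐ t ∂(volume.restrict (Set.Icc (0:ℝ) T)),
      x' t + α * x t ≤ g t * x t ^ (1 - β) + b t) :
    ∀ t ∈ Set.Icc (0:ℝ) T,
      α / 2 * ∫ τ in (0:ℝ)..t, x τ ^ β ≤
        β⁻¹ * (1 + x 0) ^ β + ∫ τ in (0:ℝ)..t, (α + g τ + b τ) :=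
  stmt_1_general T α β hα hβ0 hβ1 x x' g b hxnn hx'int hAC hgnn hbnn hgint hbint hineq
end
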